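/- Let G be the time-invariant dynamic Bayesian network DAG of the environment and suppose the joint distribution of the variables satisfies the global Markov condition and faithfulness with respect to G. Then for every index i ∈ {1,…,d}, the entry c^{a→g}_i = 1 if and only if g_{i,t} is NOT conditionally independent of the action a_{t-1} given the previous latent states g_{t-1}. -/

import Mathlib

open Relation

/-- Nodes of the time-invariant dynamic Bayesian network: latent state
components `g_{i,t}`, actions `a_t`, and rewards `r_t`. -/
inductive DBNNode (d : ℕ) : Type where
  | latent (i : Fin d) (t : ℕ)
  | action (t : ℕ)
  | reward (t : ℕ)
deriving DecidableEq

/-- The fixed binary structural masks of the DBN.  `cgg i j = true` encodes the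
edge `g_{j,t-1} → g_{i,t}`, `cag i` the edge `a_{t-1} → g_{i,t}`, `cgr i` the
edge `g_{i,t-1} → r_t`, and `car` the edge `a_{t-1} → r_t`. -/
structure DBNMasks (d : ℕ) where
  cgg : Fin d → Fin d → Bool
  cag : Fin d → Bool
  cgr : Fin d → Bool
  car : Bool

/-- The directed edges of the time-invariant DBN graph `G`. -/
def DBNEdge {d : ℕ} (c : DBNMasks d) : DBNNode d → DBNNode d → Prop
  | .latent j t, .latent i t' => t' = t + 1 ∧ c.cgg i j = true
  | .action t, .latent i t' => t' = t + 1 ∧ c.cag i = true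
  | .latent i t, .reward t' => t' = t + 1 ∧ c.cgr i = true
  | .action t, .reward t' => t' = t + 1 ∧ c.car = true
  | _, _ => False

/-- Undirected adjacency induced by a directed edge relation. -/
def Adj {V : Type*} (E : V → V → Prop) (x y : V) : Prop := E x y ∨ E y x

/-- `p` is a (simple, undirected) path in the graph with edge relation `E`:
consecutive nodes are adjacent and no node repeats. -/
def IsPathList {V : Type*} (E : V → V → Prop) (p : List V) : Prop :=
  p.Chain' (Adj E) ∧ p.Nodup

/-- A path `p` is blocked by the conditioning set `Z`: it contains a
chain `u → m → v` (in either direction) or a fork `u ← m → v` with middle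
node `m ∈ Z`, or a collider `u → m ← v` with `m ∉ Z` and no descendant of
`m` in `Z`. -/
def BlockedBy {V : Type*} (E : V → V → Prop) (Z : Set V) (p : List V) : Prop :=
  ∃ u m v : V, [u, m, v] <:+: p ∧
    ((((E u m ∧ E m v) ∨ (E v m ∧ E m u) ∨ (E m u ∧ E m v)) ∧ m ∈ Z) ∨
      ((E u m ∧ E v m) ∧ m ∉ Z ∧ ∀ w : V, Relation.TransGen E m w → w ∉ Z))

/-- `Z` d-separates `X` from `Y` in the graph with edge relation `E`: every
path between a node of `X` and a node of `Y` is blocked by `Z`. -/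
def DSep {V : Type*} (E : V → V → Prop) (X Y Z : Set V) : Prop :=
  ∀ x ∈ X, ∀ y ∈ Y, ∀ p : List V,
    IsPathList E p → p.head? = some x → p.getLast? = some y → BlockedBy E Z p

/-- The joint distribution (represented abstractly by its ternary conditional
independence relation `CI X Y Z`, "X ⫫ Y given Z") satisfies the global Markov
condition w.r.t. the graph: d-separation implies conditional independence. -/
def GlobalMarkov {V : Type*} (E : V → V → Prop)
    (CI : Set V → Set V → Set V → Prop) : Prop :=
  ∀ X Y Z : Set V, Disjoint X Y → Disjoint X Z → Disjoint Y Z →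
    DSep E X Y Z → CI X Y Z

/-- The joint distribution is faithful to the graph: every conditional
independence corresponds to a d-separation. -/
def FaithfulTo {V : Type*} (E : V → V → Prop)
    (CI : Set V → Set V → Set V → Prop) : Prop :=
  ∀ X Y Z : Set V, Disjoint X Y → Disjoint X Z → Disjoint Y Z →
    CI X Y Z → DSep E X Y Z

/-- `g_{i,t} ∈ g_t^min` iff `c_i^{g→r} = 1` or `g_{i,t}` has a directed path in
`G` to a future reward `r_{t+k}` (some `k > 0`) passing through other latent
state components. -/
def InMinSet {d : ℕ} (c : DBNMasks d) (i : Fin d) (t : ℕ) : Prop :=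
  c.cgr i = true ∨
    ∃ k : ℕ, 0 < k ∧ ∃ (j : Fin d) (s : ℕ),
      Relation.TransGen (DBNEdge c) (DBNNode.latent i t) (DBNNode.latent j s) ∧
      Relation.TransGen (DBNEdge c) (DBNNode.latent j s) (DBNNode.reward (t + k))

/-- The minimal latent state set `g_t^min`, as a set of nodes of `G`. -/
def MinSet {d : ℕ} (c : DBNMasks d) (t : ℕ) : Set (DBNNode d) :=
  {n | ∃ i : Fin d, n = DBNNode.latent i t ∧ InMinSet c i t}

/-!
Every edge of the DBN goes from time `s` to time `s + 1`, and nothing points into an action.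
So a path leaving `a_t` starts with an edge into time `t + 1`; following it, either it keeps
going forward, and then it is a directed path out of `a_t`, or it turns back at a collider lying
at time `≥ t + 1`, none of whose descendants can be among the time-`t` latents `g_t`. A directed
path from `a_t` reaching `g_{i,t+1}` must be the single edge `a_t → g_{i,t+1}`. Hence, when
`c^{a→g}_i = 0`, `g_t` d-separates `g_{i,t+1}` from `a_t` and the Markov condition gives the
independence; when `c^{a→g}_i = 1`, the edge itself is an unblocked path and faithfulness rules
the independence out.
-/

section DSeparation

variable {V : Type*} {E : V → V → Prop} {Z : Set V}

lemma BlockedBy.of_infix {q p : List V} (h : q <:+: p) (hq : BlockedBy E Z q) :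
    BlockedBy E Z p := by
  obtain ⟨u, m, v, huv, hcond⟩ := hq
  exact ⟨u, m, v, huv.trans h, hcond⟩

lemma BlockedBy.of_reverse {p : List V} (hp : BlockedBy E Z p.reverse) : BlockedBy E Z p := by
  obtain ⟨u, m, v, huv, hcond⟩ := hp
  refine ⟨v, m, u, by simpa using huv.reverse, ?_⟩
  rcases hcond with ⟨hpattern, hm⟩ | ⟨⟨hum, hvm⟩, hm⟩
  · exact Or.inl ⟨by tauto, hm⟩
  · exact Or.inr ⟨⟨hvm, hum⟩, hm⟩

lemma not_blockedBy_pair (x y : V) : ¬ BlockedBy E Z [x, y] := by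
  rintro ⟨u, m, v, huv, -⟩
  simpa using huv.length_le

lemma not_dSep_of_adj {x y : V} (hxy : x ≠ y) (h : Adj E x y) : ¬ DSep E {x} {y} Z :=
  fun hsep => not_blockedBy_pair x y <|
    hsep x rfl y rfl [x, y] ⟨List.isChain_pair.mpr h, by simpa using hxy⟩ rfl rfl

lemma blockedBy_or_transGen_of_isChain {S : Set V} (hS : ∀ ⦃u w⦄, E u w → u ∈ S → w ∈ S)
    (hSZ : ∀ w ∈ S, w ∉ Z) :
    ∀ {l : List V} {a b x : V}, E a b → b ∈ S → (a :: b :: l).IsChain (Adj E) →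
      (b :: l).getLast? = some x → BlockedBy E Z (a :: b :: l) ∨ TransGen E a x
  | [], a, b, x, hab, _, _, hx => Or.inr (by cases hx; exact TransGen.single hab)
  | w :: l, a, b, x, hab, hb, hchain, hx => by
    have hchain' := (List.isChain_cons_cons.mp hchain).2
    obtain ⟨hbw, -⟩ := List.isChain_cons_cons.mp hchain'
    rcases hbw with hbw | hwb
    · rcases blockedBy_or_transGen_of_isChain hS hSZ hbw (hS hbw hb) hchain' (by simpa using hx)
        with hblocked | hpath
      · exact Or.inl (hblocked.of_infix (List.suffix_cons a _).isInfix)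
      · exact Or.inr (TransGen.head hab hpath)
    · have hdesc : ∀ y, TransGen E b y → y ∈ S := fun y hy => by
        induction hy with
        | single h => exact hS h hb
        | tail _ h ih => exact hS h ih
      exact Or.inl ⟨a, b, w, ⟨[], l, rfl⟩,
        Or.inr ⟨⟨hab, hwb⟩, hSZ b hb, fun y hy => hSZ y (hdesc y hy)⟩⟩

theorem dSep_of_source {x y : V} (hxy : x ≠ y) (hsource : ∀ v, ¬ E v y)
    (hZ : ∀ w, TransGen E y w → w ∉ Z) (hx : ¬ TransGen E y x) : DSep E {x} {y} Z := by
  intro x' hx' y' hy' p hpath hhead hlast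
  rw [Set.mem_singleton_iff.mp hx'] at hhead
  rw [Set.mem_singleton_iff.mp hy'] at hlast
  refine BlockedBy.of_reverse ?_
  have hchain' : p.reverse.IsChain (Adj E) :=
    List.isChain_reverse.mpr (hpath.1.imp fun _ _ h => Or.symm h)
  match hp : p.reverse, hchain' with
  | [], _ => simp_all
  | [z], _ =>
    have : p = [z] := by simpa using congrArg List.reverse hp
    simp_all
  | z :: b :: l, hchain' =>
    have hz : z = y := by simpa [hp] using List.head?_reverse.trans hlast
    subst hz
    have hzb : E z b := (List.isChain_cons_cons.mp hchain').1.resolve_right (hsource b)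
    have hend : (b :: l).getLast? = some x := by
      simpa [hp, List.getLast?_cons] using List.getLast?_reverse.trans hhead
    exact (blockedBy_or_transGen_of_isChain (S := {w | TransGen E z w})
      (fun _ _ h hu => TransGen.tail hu h) hZ hzb (TransGen.single hzb) hchain' hend).resolve_right hx

end DSeparation

namespace DBNNode

variable {d : ℕ} {c : DBNMasks d}

def time : DBNNode d → ℕ
  | latent _ s => s
  | action s => s
  | reward s => s

lemma time_of_dbnEdge {x y : DBNNode d} (h : DBNEdge c x y) : y.time = x.time + 1 := by
  cases x <;> cases y <;> simp only [DBNEdge] at h <;> simp [time, h.1]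

lemma time_lt_of_transGen {x y : DBNNode d} (h : TransGen (DBNEdge c) x y) : x.time < y.time := by
  induction h with
  | single h => simp [time_of_dbnEdge h]
  | tail _ h ih => simp only [time_of_dbnEdge h]; omega

lemma not_dbnEdge_action (x : DBNNode d) (t : ℕ) : ¬ DBNEdge c x (action t) := by
  cases x <;> simp [DBNEdge]

lemma transGen_action_latent_iff {i : Fin d} {t : ℕ} :
    TransGen (DBNEdge c) (action t) (latent i (t + 1)) ↔ c.cag i = true := by
  refine ⟨fun h => ?_, fun h => TransGen.single ⟨rfl, h⟩⟩
  obtain ⟨z, hz, hzi⟩ := TransGen.tail'_iff.mp h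
  rcases reflTransGen_iff_eq_or_transGen.mp hz with rfl | hz
  · exact hzi.2
  · have hlt := time_lt_of_transGen hz
    have hedge_time := time_of_dbnEdge hzi
    simp only [time] at hlt hedge_time
    omega

end DBNNode

/-- Under the global Markov condition and faithfulness, `c^{a→g}_i = 1` iff
`g_{i,t}` is conditionally dependent on the action `a_{t-1}` given the previous
latent states `g_{t-1}`. -/
theorem cag_identification (d : ℕ) (c : DBNMasks d)
    (CI : Set (DBNNode d) → Set (DBNNode d) → Set (DBNNode d) → Prop)
    (hMarkov : GlobalMarkov (DBNEdge c) CI)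
    (hFaithful : FaithfulTo (DBNEdge c) CI) (i : Fin d) (t : ℕ) :
    c.cag i = true ↔
      ¬ CI {DBNNode.latent i (t + 1)} {DBNNode.action t}
        {n : DBNNode d | ∃ j : Fin d, n = DBNNode.latent j t} := by
  set Z : Set (DBNNode d) := {n | ∃ j : Fin d, n = DBNNode.latent j t}
  have hne : DBNNode.latent i (t + 1) ≠ DBNNode.action t := by simp
  have hdisj₁ : Disjoint ({DBNNode.latent i (t + 1)} : Set (DBNNode d)) {DBNNode.action t} :=
    Set.disjoint_singleton.mpr hne
  have hdisj₂ : Disjoint ({DBNNode.latent i (t + 1)} : Set (DBNNode d)) Z := by simp [Z]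
  have hdisj₃ : Disjoint ({DBNNode.action t} : Set (DBNNode d)) Z := by simp [Z]
  constructor
  · exact fun hcag hCI => not_dSep_of_adj hne (Or.inr ⟨rfl, hcag⟩)
      (hFaithful _ _ _ hdisj₁ hdisj₂ hdisj₃ hCI)
  · refine fun hdep => by_contra fun hcag => hdep <| hMarkov _ _ _ hdisj₁ hdisj₂ hdisj₃ ?_
    refine dSep_of_source hne (fun v => DBNNode.not_dbnEdge_action v t) ?_
      (DBNNode.transGen_action_latent_iff.not.mpr hcag)
    rintro w hw ⟨j, rfl⟩
    simpa [DBNNode.time] using DBNNode.time_lt_of_transGen hw
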